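/- Let S be a symmetric unitary complex matrix on N-tuple indices such that: (i) every partial trace tr_{¬p}(S) is a symmetric matrix, (ii) the matrix X = S⋆·(tr_{¬1}(S) ⊗ ⋯ ⊗ tr_{¬N}(S)) is normal (X·X⋆ = X⋆·X), and (iii) the singular values of tr_{¬1}(S) ⊗ ⋯ ⊗ tr_{¬N}(S) are pairwise distinct. Then there exist unitary matrices U_p (d_p×d_p) such that (⊗_p U_p)·S·(⊗_p U_p)ᵀ is diagonal; i.e. the conjugation θ(v) = S·conj(v) is Prod-measurable. -/

import Mathlib

open Matrix Kronecker

noncomputable section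

/-- N-fold Kronecker product of matrices, on dependent-tuple indices. -/
def nKron {N : ℕ} {ι : Fin N → Type} (A : ∀ p, Matrix (ι p) (ι p) ℂ) :
    Matrix (∀ p, ι p) (∀ p, ι p) ℂ :=
  Matrix.of fun i j => ∏ p, A p (i p) (j p)

/-- Partial trace over all subsystems except `p`. -/
def ptrace {N : ℕ} {d : Fin N → ℕ} (S : Matrix (∀ p, Fin (d p)) (∀ p, Fin (d p)) ℂ)
    (p : Fin N) : Matrix (Fin (d p)) (Fin (d p)) ℂ :=
  Matrix.of fun a b =>
    ∑ k : ∀ q, Fin (d q), if k p = a then S k (Function.update k p b) else 0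

section KronLemmas

variable {N : ℕ} {ι : Fin N → Type} [∀ p, Fintype (ι p)] [∀ p, DecidableEq (ι p)]

lemma nKron_mul (A B : ∀ p, Matrix (ι p) (ι p) ℂ) :
    nKron A * nKron B = nKron (fun p => A p * B p) := by
  ext i j
  simp only [nKron, Matrix.mul_apply, Matrix.of_apply]
  calc
    ∑ k : ∀ p, ι p, (∏ p, A p (i p) (k p)) * ∏ p, B p (k p) (j p)
        = ∑ k : ∀ p, ι p, ∏ p, A p (i p) (k p) * B p (k p) (j p) := by
          refine Finset.sum_congr rfl fun k _ => ?_
          rw [← Finset.prod_mul_distrib]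
    _ = ∏ p, ∑ m : ι p, A p (i p) m * B p m (j p) := by
          rw [Finset.prod_univ_sum, Fintype.piFinset_univ]

lemma nKron_transpose (A : ∀ p, Matrix (ι p) (ι p) ℂ) :
    (nKron A)ᵀ = nKron (fun p => (A p)ᵀ) := by
  ext i j; rfl

lemma nKron_conjTranspose (A : ∀ p, Matrix (ι p) (ι p) ℂ) :
    (nKron A)ᴴ = nKron (fun p => (A p)ᴴ) := by
  ext i j
  simp only [nKron, Matrix.conjTranspose_apply, Matrix.of_apply, star_prod]

lemma nKron_diagonal (δ : ∀ p, ι p → ℂ) :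
    nKron (fun p => Matrix.diagonal (δ p)) =
      Matrix.diagonal (fun i => ∏ p, δ p (i p)) := by
  ext i j
  by_cases h : i = j
  · subst h
    simp [nKron, Matrix.diagonal_apply_eq]
  · obtain ⟨p, hp⟩ : ∃ p, i p ≠ j p := by
      by_contra hc
      push_neg at hc
      exact h (funext hc)
    rw [Matrix.diagonal_apply_ne _ h]
    simp only [nKron, Matrix.of_apply]
    exact Finset.prod_eq_zero (Finset.mem_univ p) (Matrix.diagonal_apply_ne _ hp)

lemma nKron_one : nKron (fun p => (1 : Matrix (ι p) (ι p) ℂ)) = 1 := by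
  have : (fun p => (1 : Matrix (ι p) (ι p) ℂ)) =
      fun p => Matrix.diagonal (fun _ : ι p => (1 : ℂ)) := by
    funext p; rw [Matrix.diagonal_one]
  rw [this, nKron_diagonal]
  simp [Matrix.diagonal_one]

end KronLemmas

section CharpolyLemmas

open Polynomial

variable {n : Type*} [Fintype n] [DecidableEq n]

lemma charpoly_unitary_conj (V A : Matrix n n ℂ) (h1 : V * Vᴴ = 1) (h2 : Vᴴ * V = 1) :
    (V * A * Vᴴ).charpoly = A.charpoly := by
  have hVC : V.map C * Vᴴ.map C = 1 := by
    rw [← Matrix.map_mul, h1, Matrix.map_one _ (map_zero C) (map_one C)]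
  have hscal : V.map C * Matrix.scalar n (X : ℂ[X]) * Vᴴ.map C = Matrix.scalar n (X : ℂ[X]) := by
    rw [← (Matrix.scalar_commute (X : ℂ[X]) (fun r' => Commute.all _ _) (V.map C)).eq,
      Matrix.mul_assoc, hVC, Matrix.mul_one]
  have hkey : charmatrix (V * A * Vᴴ) = V.map C * charmatrix A * Vᴴ.map C := by
    rw [charmatrix, charmatrix, Matrix.mul_sub, Matrix.sub_mul, hscal]
    congr 1
    simp only [RingHom.mapMatrix_apply, Matrix.map_mul]
  unfold Matrix.charpoly
  rw [hkey, Matrix.det_mul, Matrix.det_mul]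
  have hdet : (V.map C).det * (Vᴴ.map C).det = 1 := by
    rw [← Matrix.det_mul, hVC, Matrix.det_one]
  calc (V.map C).det * (charmatrix A).det * (Vᴴ.map C).det
      = (charmatrix A).det * ((V.map C).det * (Vᴴ.map C).det) := by ring
    _ = (charmatrix A).det := by rw [hdet, mul_one]

lemma charpoly_roots_diagonal (δ : n → ℂ) :
    (Matrix.diagonal δ).charpoly.roots = Finset.univ.val.map δ := by
  have hcm : charmatrix (Matrix.diagonal δ) =
      Matrix.diagonal (fun i => (X : ℂ[X]) - C (δ i)) := by
    ext i j
    by_cases h : i = j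
    · subst h
      rw [charmatrix_apply_eq, Matrix.diagonal_apply_eq, Matrix.diagonal_apply_eq]
    · rw [charmatrix_apply_ne _ _ _ h, Matrix.diagonal_apply_ne _ h,
        Matrix.diagonal_apply_ne _ h, map_zero, neg_zero]
  have hcp : (Matrix.diagonal δ).charpoly = ∏ i, ((X : ℂ[X]) - C (δ i)) := by
    rw [Matrix.charpoly, hcm, Matrix.det_diagonal]
  rw [hcp]
  have : ∏ i, ((X : ℂ[X]) - C (δ i)) =
      ((Finset.univ.val.map δ).map (fun a => (X : ℂ[X]) - C a)).prod := by
    rw [Multiset.map_map]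
    rfl
  rw [this, Polynomial.roots_multiset_prod_X_sub_C]

end CharpolyLemmas

lemma conjTranspose_transpose' {m : Type*} (M : Matrix m m ℂ) : (Mᵀ)ᴴ = (Mᴴ)ᵀ := by
  ext i j
  rfl

theorem stmt9 {N : ℕ} {d : Fin N → ℕ}
    (S : Matrix (∀ p, Fin (d p)) (∀ p, Fin (d p)) ℂ) (hs : Sᵀ = S) (hu : Sᴴ * S = 1)
    (h1 : ∀ p, (ptrace S p)ᵀ = ptrace S p)
    (h2 : (Sᴴ * nKron (fun p => ptrace S p)) * (Sᴴ * nKron (fun p => ptrace S p))ᴴ =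
      (Sᴴ * nKron (fun p => ptrace S p))ᴴ * (Sᴴ * nKron (fun p => ptrace S p)))
    (h3 : ((nKron (fun p => ptrace S p))ᴴ * nKron (fun p => ptrace S p)).charpoly.roots.Nodup) :
    ∃ U : ∀ p, Matrix (Fin (d p)) (Fin (d p)) ℂ,
      (∀ p, (U p)ᴴ * U p = 1) ∧ (nKron U * S * (nKron U)ᵀ).IsDiag := by
  classical
  set A : ∀ p, Matrix (Fin (d p)) (Fin (d p)) ℂ := fun p => ptrace S p with hA
  set T : Matrix (∀ p, Fin (d p)) (∀ p, Fin (d p)) ℂ := nKron A with hT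
  -- T is symmetric
  have hTt : Tᵀ = T := by
    have : (fun p => (A p)ᵀ) = A := funext fun p => h1 p
    rw [hT, nKron_transpose, this]
  set M : Matrix (∀ p, Fin (d p)) (∀ p, Fin (d p)) ℂ := Tᴴ * T with hM
  have hSS : S * Sᴴ = 1 := mul_eq_one_comm.mp hu
  -- From h2 : Mᵀ * S = S * M
  have hrel : Mᵀ * S = S * M := by
    have hXH : (Sᴴ * T)ᴴ = Tᴴ * S := by
      rw [Matrix.conjTranspose_mul, Matrix.conjTranspose_conjTranspose]
    have hTh : (Tᴴ)ᵀ = Tᴴ := by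
      rw [← conjTranspose_transpose' T, hTt]
    have hMt : Mᵀ = T * Tᴴ := by
      rw [hM, Matrix.transpose_mul, hTt, hTh]
    have e1 : (Sᴴ * T)ᴴ * (Sᴴ * T) = M := by
      rw [hXH, hM, Matrix.mul_assoc, ← Matrix.mul_assoc S, hSS, Matrix.one_mul]
    have e2 : (Sᴴ * T) * (Sᴴ * T)ᴴ = Sᴴ * Mᵀ * S := by
      rw [hXH, hMt]
      rw [Matrix.mul_assoc, Matrix.mul_assoc, Matrix.mul_assoc]
    have h2' : Sᴴ * Mᵀ * S = M := by rw [← e2, h2, e1]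
    calc Mᵀ * S = (S * Sᴴ) * Mᵀ * S := by rw [hSS, Matrix.one_mul]
      _ = S * (Sᴴ * Mᵀ * S) := by rw [Matrix.mul_assoc, Matrix.mul_assoc, Matrix.mul_assoc]
      _ = S * M := by rw [h2']
  -- spectral decomposition of each factor
  have hHerm : ∀ p, ((A p)ᴴ * A p).IsHermitian := fun p =>
    Matrix.isHermitian_conjTranspose_mul_self (A p)
  set V : ∀ p, Matrix (Fin (d p)) (Fin (d p)) ℂ :=
    fun p => ((hHerm p).eigenvectorUnitary : Matrix (Fin (d p)) (Fin (d p)) ℂ) with hV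
  set δ : ∀ p, Fin (d p) → ℂ := fun p a => ((hHerm p).eigenvalues a : ℂ) with hδ
  have hVu : ∀ p, (V p) * (V p)ᴴ = 1 := by
    intro p
    have := ((hHerm p).eigenvectorUnitary).2
    rw [Matrix.mem_unitaryGroup_iff] at this
    rw [← Matrix.star_eq_conjTranspose]
    exact this
  have hVu' : ∀ p, (V p)ᴴ * (V p) = 1 := fun p => mul_eq_one_comm.mp (hVu p)
  have hspec : ∀ p, (A p)ᴴ * A p = V p * Matrix.diagonal (δ p) * (V p)ᴴ := by
    intro p
    have h := (hHerm p).spectral_theorem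
    simp only [Unitary.conjStarAlgAut_apply, Unitary.coe_star, Matrix.star_eq_conjTranspose] at h
    simpa [hδ, Function.comp_def] using h
  set W : Matrix (∀ p, Fin (d p)) (∀ p, Fin (d p)) ℂ := nKron V with hW
  set Δ : (∀ p, Fin (d p)) → ℂ := fun i => ∏ p, δ p (i p) with hΔ
  set D : Matrix (∀ p, Fin (d p)) (∀ p, Fin (d p)) ℂ := Matrix.diagonal Δ with hD
  have hWu : W * Wᴴ = 1 := by
    rw [hW, nKron_conjTranspose, nKron_mul]
    rw [show (fun p => V p * (V p)ᴴ) = fun p => (1 : Matrix (Fin (d p)) (Fin (d p)) ℂ) from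
      funext fun p => hVu p]
    exact nKron_one
  have hWu' : Wᴴ * W = 1 := mul_eq_one_comm.mp hWu
  -- M = W * D * Wᴴ
  have hMdec : M = W * D * Wᴴ := by
    rw [hM, hT, nKron_conjTranspose, nKron_mul]
    rw [show (fun p => (A p)ᴴ * A p) =
      (fun p => V p * Matrix.diagonal (δ p) * (V p)ᴴ) from funext fun p => hspec p]
    rw [hW, hD, hΔ, ← nKron_diagonal, nKron_conjTranspose, nKron_mul, nKron_mul]
  -- Δ is injective
  have hinj : Function.Injective Δ := by
    have hch : M.charpoly = D.charpoly := by
      rw [hMdec, charpoly_unitary_conj W D hWu hWu']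
    have hroots : M.charpoly.roots = Finset.univ.val.map Δ := by
      rw [hch, hD, charpoly_roots_diagonal]
    have h3' : (Finset.univ.val.map Δ).Nodup := by
      rw [← hroots]
      exact h3
    intro x y hxy
    exact Multiset.inj_on_of_nodup_map h3' x (Finset.mem_univ_val x) y
      (Finset.mem_univ_val y) hxy
  -- B := Wᵀ * S * W commutes with D
  set B : Matrix (∀ p, Fin (d p)) (∀ p, Fin (d p)) ℂ := Wᵀ * S * W with hB
  have hcomm : D * B = B * D := by
    have hMt : Mᵀ = (Wᴴ)ᵀ * D * Wᵀ := by
      rw [hMdec, Matrix.transpose_mul, Matrix.transpose_mul, hD, Matrix.diagonal_transpose,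
        ← hD]
      simp only [Matrix.mul_assoc]
    have hWtW : Wᵀ * (Wᴴ)ᵀ = 1 := by
      rw [← Matrix.transpose_mul, hWu', Matrix.transpose_one]
    have := hrel
    rw [hMt, hMdec] at this
    -- (Wᴴ)ᵀ * D * Wᵀ * S = S * (W * D * Wᴴ)
    calc D * B
        = (Wᵀ * (Wᴴ)ᵀ) * D * (Wᵀ * S * W) := by rw [hWtW, Matrix.one_mul, hB]
      _ = Wᵀ * ((Wᴴ)ᵀ * D * Wᵀ * S) * W := by
          simp only [Matrix.mul_assoc]
      _ = Wᵀ * (S * (W * D * Wᴴ)) * W := by rw [this]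
      _ = (Wᵀ * S * W) * D * (Wᴴ * W) := by simp only [Matrix.mul_assoc]
      _ = B * D := by rw [hWu', Matrix.mul_one, hB]
  have hBdiag : B.IsDiag := by
    intro i j hij
    have h1 : (D * B) i j = Δ i * B i j := by rw [hD, Matrix.diagonal_mul]
    have h2 : (B * D) i j = B i j * Δ j := by rw [hD, Matrix.mul_diagonal]
    have h3 : Δ i * B i j = B i j * Δ j := by rw [← h1, ← h2, hcomm]
    have hΔne : Δ i ≠ Δ j := fun hc => hij (hinj hc)
    have hz : (Δ i - Δ j) * B i j = 0 := by linear_combination h3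
    rcases mul_eq_zero.mp hz with h | h
    · exact absurd (sub_eq_zero.mp h) hΔne
    · exact h
  refine ⟨fun p => (V p)ᵀ, fun p => ?_, ?_⟩
  · rw [conjTranspose_transpose', ← Matrix.transpose_mul, hVu p, Matrix.transpose_one]
  · have e1 : nKron (fun p => (V p)ᵀ) = Wᵀ := by rw [hW, nKron_transpose]
    have e2 : (nKron (fun p => (V p)ᵀ))ᵀ = W := by rw [e1, Matrix.transpose_transpose]
    rw [e2, e1]
    exact hBdiag
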